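/- Let P = ⟨a,b,c,p | ap=a, pc=c, bp=b, pb=b⟩. The set of words equal to abc modulo P is exactly { a pⁿ b pᵐ c : n, m ≥ 0 }. -/

import Mathlib

namespace Squier

/-- The pair `{u,v}` occurs (in some order) among the defining relations `R`. -/
def Rel {α : Type*} (R : List α → List α → Prop) (u v : List α) : Prop :=
  R u v ∨ R v u

/-- One rewriting step: replace one occurrence of a subword `p` by `q`, where
`(p,q)` or `(q,p)` is a defining relation. -/
def Step {α : Type*} (R : List α → List α → Prop) (x y : List α) : Prop :=
  ∃ a p q b : List α, Rel R p q ∧ x = a ++ p ++ b ∧ y = a ++ q ++ b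

/-- Two words are equal modulo the presentation `⟨α ∣ R⟩`. -/
def EqMod {α : Type*} (R : List α → List α → Prop) : List α → List α → Prop :=
  Relation.ReflTransGen (Step R)

/-- The alphabet `{a, b, c, p}`. -/
inductive L4 : Type
  | a | b | c | p
deriving DecidableEq

open L4

/-- The relations of `P = ⟨a,b,c,p ∣ ap=a, pc=c, bp=b, pb=b⟩`. -/
def R10 : List L4 → List L4 → Prop := fun u v =>
  (u = [a, p] ∧ v = [a]) ∨ (u = [p, c] ∧ v = [c]) ∨
  (u = [b, p] ∧ v = [b]) ∨ (u = [p, b] ∧ v = [b])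

/-- The invariant preserved by rewriting. -/
def Inv (w : List L4) : Prop :=
  w.head? = some a ∧ w.reverse.head? = some c ∧ w.filter (· != p) = [a, b, c]

lemma step_symm : Symmetric (Step R10) := by
  rintro x y ⟨A, u, v, B, hr, hx, hy⟩
  exact ⟨A, v, u, B, hr.symm, hy, hx⟩

lemma inv_step {x y : List L4} (hI : Inv x) (h : Step R10 x y) : Inv y := by
  obtain ⟨A, u, v, B, hr, hx, hy⟩ := h
  obtain ⟨h1, h2, h3⟩ := hI
  subst hx; subst hy
  have hfil : ∀ u' v' : List L4, u'.filter (· != p) = v'.filter (· != p) →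
      (A ++ u' ++ B).filter (· != p) = [a,b,c] →
      (A ++ v' ++ B).filter (· != p) = [a,b,c] := by
    intro u' v' he hf
    simpa [List.filter_append, he] using hf
  have hhead : ∀ u' v' : List L4, u' ≠ [] → v' ≠ [] →
      (u'.head? = some a → v'.head? = some a) →
      (A ++ u' ++ B).head? = some a → (A ++ v' ++ B).head? = some a := by
    intro u' v' hu hv himp hh
    obtain ⟨x, u'', rfl⟩ := List.exists_cons_of_ne_nil hu
    obtain ⟨y, v'', rfl⟩ := List.exists_cons_of_ne_nil hv
    cases A with
    | nil =>
      simp only [List.nil_append, List.cons_append, List.head?_cons] at hh ⊢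
      exact himp hh
    | cons z t => simpa using hh
  have hlast : ∀ u' v' : List L4, u'.reverse ≠ [] → v'.reverse ≠ [] →
      (u'.reverse.head? = some c → v'.reverse.head? = some c) →
      (A ++ u' ++ B).reverse.head? = some c → (A ++ v' ++ B).reverse.head? = some c := by
    intro u' v' hu hv himp hh
    obtain ⟨x, u'', hxu⟩ := List.exists_cons_of_ne_nil hu
    obtain ⟨y, v'', hyv⟩ := List.exists_cons_of_ne_nil hv
    cases B with
    | nil =>
      simp only [List.append_nil, List.reverse_append, hxu, hyv,
        List.cons_append, List.head?_cons] at hh ⊢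
      have := himp (by rw [hxu, List.head?_cons, hh])
      rwa [hyv, List.head?_cons] at this
    | cons z t =>
      simp only [List.reverse_append, List.reverse_cons, List.append_assoc,
        List.head?_append] at hh ⊢
      simpa using hh
  rcases hr with hr | hr <;> rcases hr with ⟨hu, hv⟩ | ⟨hu, hv⟩ | ⟨hu, hv⟩ | ⟨hu, hv⟩ <;>
    subst hu <;> subst hv <;>
    exact ⟨hhead _ _ (by simp) (by simp) (by decide) h1,
      hlast _ _ (by simp) (by simp) (by decide) h2,
      hfil _ _ (by decide) h3⟩

lemma filter_eq_cons : ∀ {w : List L4} {x xs}, w.filter (· != p) = x :: xs →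
    ∃ k t, w = List.replicate k p ++ x :: t ∧ t.filter (· != p) = xs := by
  intro w
  induction w with
  | nil => intro x xs h; simp at h
  | cons h0 t ih =>
    intro x xs h
    by_cases hp : h0 = p
    · subst hp
      rw [List.filter_cons] at h
      simp only [bne_self_eq_false, if_neg, Bool.false_eq_true, not_false_iff,
        if_false] at h
      obtain ⟨k, t', ht', hft⟩ := ih h
      exact ⟨k + 1, t', by simp [List.replicate_succ, ht'], hft⟩
    · rw [List.filter_cons, if_pos (by simpa using hp)] at h
      obtain ⟨rfl, rfl⟩ : h0 = x ∧ t.filter (· != p) = xs := by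
        constructor <;> [exact (List.cons.injEq .. ▸ h).1; exact (List.cons.injEq .. ▸ h).2]
      exact ⟨0, t, by simp, rfl⟩

lemma filter_eq_nil {w : List L4} (h : w.filter (· != p) = []) :
    w = List.replicate w.length p := by
  have hm : ∀ x ∈ w, x = p := by
    intro x hx
    have := List.filter_eq_nil_iff.mp h x hx
    simpa using this
  exact List.eq_replicate_length.mpr hm

lemma inv_char {w : List L4} (h : Inv w) :
    ∃ n m : ℕ, w = [a] ++ List.replicate n p ++ [b] ++ List.replicate m p ++ [c] := by
  obtain ⟨h1, h2, h3⟩ := h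
  obtain ⟨k0, t, rfl, ht⟩ := filter_eq_cons h3
  cases k0 with
  | succ k => simp [List.replicate_succ] at h1
  | zero =>
    obtain ⟨n, t2, rfl, ht2⟩ := filter_eq_cons ht
    obtain ⟨m, t3, rfl, ht3⟩ := filter_eq_cons ht2
    have h4 := filter_eq_nil ht3
    rcases t3 with _ | ⟨z, t4⟩
    · exact ⟨n, m, by simp⟩
    · exfalso
      have h5 : z :: t4 = p :: List.replicate t4.length p := by
        simpa [List.replicate_succ] using h4
      injection h5 with hz ht4
      subst hz
      rw [ht4] at h2
      have key : ∀ (k : ℕ) (l : List L4), (List.replicate k p ++ p :: l).head? = some p := by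
        intro k l; cases k <;> simp [List.replicate_succ]
      simp only [List.reverse_append, List.reverse_cons, List.reverse_replicate,
        List.append_assoc, List.nil_append, List.cons_append, key] at h2
      exact absurd h2 (by decide)

lemma reduce (n m : ℕ) :
    EqMod R10 ([a] ++ List.replicate n p ++ [b] ++ List.replicate m p ++ [c]) [a, b, c] := by
  induction n with
  | succ n ih =>
    have hstep : Step R10 ([a] ++ List.replicate (n + 1) p ++ [b] ++ List.replicate m p ++ [c])
        ([a] ++ List.replicate n p ++ [b] ++ List.replicate m p ++ [c]) :=
      ⟨[], [a, p], [a], List.replicate n p ++ [b] ++ List.replicate m p ++ [c],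
        Or.inl (Or.inl ⟨rfl, rfl⟩), by simp [List.replicate_succ], by simp⟩
    exact Relation.ReflTransGen.head hstep ih
  | zero =>
    induction m with
    | succ m ih =>
      have hstep : Step R10
          ([a] ++ List.replicate 0 p ++ [b] ++ List.replicate (m + 1) p ++ [c])
          ([a] ++ List.replicate 0 p ++ [b] ++ List.replicate m p ++ [c]) :=
        ⟨[a], [b, p], [b], List.replicate m p ++ [c],
          Or.inl (Or.inr (Or.inr (Or.inl ⟨rfl, rfl⟩))), by simp [List.replicate_succ], by simp⟩
      exact Relation.ReflTransGen.head hstep ih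
    | zero => exact Relation.ReflTransGen.refl

/-- For `P = ⟨a,b,c,p ∣ ap=a, pc=c, bp=b, pb=b⟩`, the set of words equal to
`abc` modulo `P` is exactly `{ a pⁿ b pᵐ c : n, m ≥ 0 }`. -/
theorem stmt10 (w : List L4) :
    EqMod R10 w [a, b, c] ↔
      ∃ n m : ℕ,
        w = [a] ++ List.replicate n p ++ [b] ++ List.replicate m p ++ [c] := by
  constructor
  · intro h
    have h' : Relation.ReflTransGen (Step R10) [a, b, c] w :=
      by haveI : Std.Symm (Step R10) := ⟨fun _ _ hxy => step_symm hxy⟩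
         exact (Relation.ReflTransGen.symmetric (r := Step R10)).symm _ _ h
    clear h
    apply inv_char
    induction h' with
    | refl => exact ⟨rfl, rfl, rfl⟩
    | tail _ hstep ih => exact inv_step ih hstep
  · rintro ⟨n, m, rfl⟩
    exact reduce n m

end Squier
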